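/- Let R be a commutative Noetherian ring, F : 0 → F_b → ⋯ → F_a → 0 a finite free R-complex with differentials ∂_n, and n an integer with a ≤ n ≤ b. If p is a prime ideal of R such that H_i(F)_p = 0 for all i ≤ n, then the image of the localized map (∂_{n+1})_p : (F_{n+1})_p → (F_n)_p is a free R_p-module of rank s_n = Σ_{i ≤ n} (−1)^{n−i} rank_R F_i, and consequently I_{s_n}(∂_{n+1})_p = R_p. -/

import Mathlib

open Matrix

/-- Convert a Krull-dimension value (in `WithBot ℕ∞`) to an extended real. -/
noncomputable def krullDimToEReal (d : WithBot ℕ∞) : EReal :=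
  WithBot.recBotCoe ⊥ (fun d' => WithTop.recTopCoe ⊤ (fun m : ℕ => ((m : ℝ) : EReal)) d') d

/-- Krull dimension of a ring, as an extended real. -/
noncomputable def ringDimE (R : Type) [CommRing R] : EReal := krullDimToEReal (ringKrullDim R)

/-- Krull dimension of a module: the dimension of `R ⧸ ann M`, `-∞` for the zero module. -/
noncomputable def moduleDimE (R : Type) [CommRing R] (M : Type) [AddCommGroup M] [Module R M] :
    EReal :=
  krullDimToEReal (ringKrullDim (R ⧸ Module.annihilator R M))

/-- A finite free complex `F : 0 → F_b → ⋯ → F_a → 0`, encoded by the ranks of the `F_i`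
and the matrices of the differentials: `d n` is the matrix of `∂_{n+1} : F_{n+1} → F_n`. -/
structure FinFreeComplex (R : Type) [CommRing R] where
  a : ℤ
  b : ℤ
  rank : ℤ → ℕ
  d : ∀ n : ℤ, Matrix (Fin (rank n)) (Fin (rank (n + 1))) R
  rank_eq_zero : ∀ n : ℤ, n < a ∨ b < n → rank n = 0
  d_comp_d : ∀ n : ℤ, d n * d (n + 1) = 0

namespace FinFreeComplex

variable {R : Type} [CommRing R] (F : FinFreeComplex R)

/-- The `n`-th homology of `F`: `ker ∂_n / im ∂_{n+1}`. -/
abbrev homologyAt (n : ℤ) : Type :=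
  ↥(LinearMap.ker (F.d (n - 1)).mulVecLin) ⧸
    (LinearMap.range (F.d (n - 1 + 1)).mulVecLin).comap
      (LinearMap.ker (F.d (n - 1)).mulVecLin).subtype

/-- Foxby's Krull dimension of the complex `F`: `sup { dim H_n(F) - n }`. -/
noncomputable def dim : EReal :=
  ⨆ n : ℤ, (moduleDimE R (F.homologyAt n) - ((n : ℝ) : EReal))

/-- `s_n = Σ_{i ≤ n} (-1)^{n-i} rank F_i`. -/
noncomputable def s (n : ℤ) : ℤ := ∑ᶠ i ∈ Set.Iic n, (-1 : ℤ) ^ (n - i).toNat * (F.rank i : ℤ)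

end FinFreeComplex

/-- The ideal of `s × s` minors of a matrix, with the conventions that it is the unit
ideal when `s ≤ 0` or when the matrix is empty (`0 × 0`), and that an `s × s` minor of a
nonempty matrix is `0` when `s` exceeds the number of rows or columns. -/
noncomputable def minorsIdeal {R : Type} [CommRing R] {p q : ℕ} (A : Matrix (Fin p) (Fin q) R)
    (s : ℤ) : Ideal R :=
  if s ≤ 0 then ⊤
  else if p = 0 ∧ q = 0 then ⊤
  else Ideal.span {x : R | ∃ (f : Fin s.toNat → Fin p) (g : Fin s.toNat → Fin q),
    Function.Injective f ∧ Function.Injective g ∧ x = (A.submatrix f g).det}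

/-!
After localizing at `p` the complex is exact in degrees `≤ n` over the local ring `R_p`.
By induction on `i ≤ n`, the image `B_i` of `∂_{i+1}` is free of rank `s_i`: exactness gives
`B_i = ker ∂_i`, and since `B_{i-1}` is free the surjection `F_i → B_{i-1}` splits, so `B_i` is a
direct summand of `F_i`, hence projective and therefore free, of rank `rank F_i - s_{i-1} = s_i`.

For the minors: `B_n` is a free direct summand of `F_n` of rank `s = s_n` and `F_{n+1} → B_n`
splits, so there are matrices `U`, `V` with `U ∂_{n+1} V = 1_s`. Expanding `det (U ∂_{n+1} V)`
multilinearly in rows and then in columns (Cauchy–Binet) writes `1` as a combination of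
`s × s` minors of `∂_{n+1}`.
-/

section Minors

variable {S : Type*} [CommRing S]

def Matrix.minors {m n : Type*} (A : Matrix m n S) (k : ℕ) : Set S :=
  {x | ∃ (f : Fin k → m) (g : Fin k → n),
    Function.Injective f ∧ Function.Injective g ∧ x = (A.submatrix f g).det}

theorem Matrix.minors_map {T : Type*} [CommRing T] (φ : S →+* T) {m n : Type*}
    (A : Matrix m n S) (k : ℕ) : (A.map φ).minors k = φ '' A.minors k := by
  ext x
  constructor
  · rintro ⟨f, g, hf, hg, rfl⟩
    exact ⟨_, ⟨f, g, hf, hg, rfl⟩, by rw [RingHom.map_det]; rfl⟩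
  · rintro ⟨_, ⟨f, g, hf, hg, rfl⟩, rfl⟩
    exact ⟨f, g, hf, hg, by rw [RingHom.map_det]; rfl⟩

theorem Matrix.det_mul_eq_sum_det_submatrix {n m : Type*} [Fintype n] [DecidableEq n]
    [Fintype m] (U : Matrix n m S) (C : Matrix m n S) :
    (U * C).det = ∑ f : n → m, (∏ i, U i (f i)) * (C.submatrix f id).det := by
  have hrows : U * C = Matrix.of fun i => ∑ k, U i k • C k := by
    ext i j; simp [Matrix.mul_apply]
  rw [hrows]
  refine (Matrix.detRowAlternating.toMultilinearMap.map_sum _).trans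
    (Finset.sum_congr rfl fun f _ => ?_)
  exact (Matrix.detRowAlternating.toMultilinearMap.map_smul_univ _ _).trans (smul_eq_mul _ _)

theorem Matrix.det_mul_mem_span_det_submatrix_rows {n m : Type*} [Fintype n] [DecidableEq n]
    [Fintype m] (U : Matrix n m S) (C : Matrix m n S) :
    (U * C).det ∈
      Ideal.span {x | ∃ f : n → m, Function.Injective f ∧ x = (C.submatrix f id).det} := by
  rw [Matrix.det_mul_eq_sum_det_submatrix]
  refine Ideal.sum_mem _ fun f _ => Ideal.mul_mem_left _ _ ?_
  by_cases hf : Function.Injective f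
  · exact Ideal.subset_span ⟨f, hf, rfl⟩
  · obtain ⟨i, j, hij, hne⟩ := Function.not_injective_iff.mp hf
    rw [Matrix.det_zero_of_row_eq hne (by ext; simp [hij])]
    exact Ideal.zero_mem _

theorem Matrix.det_mul_mem_span_det_submatrix_cols {n m : Type*} [Fintype n] [DecidableEq n]
    [Fintype m] (B : Matrix n m S) (V : Matrix m n S) :
    (B * V).det ∈
      Ideal.span {x | ∃ g : n → m, Function.Injective g ∧ x = (B.submatrix id g).det} := by
  rw [← Matrix.det_transpose, Matrix.transpose_mul]
  convert Matrix.det_mul_mem_span_det_submatrix_rows Vᵀ Bᵀ using 4 with x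
  simp [← Matrix.transpose_submatrix]

theorem Matrix.one_mem_span_minors_of_mul_mul_eq_one {k : ℕ} {m n : Type*} [Fintype m]
    [Fintype n] (U : Matrix (Fin k) m S) (D : Matrix m n S) (V : Matrix n (Fin k) S)
    (h : U * D * V = 1) : (1 : S) ∈ Ideal.span (D.minors k) := by
  have hcols : ∀ f : Fin k → m, Function.Injective f →
      ((D * V).submatrix f id).det ∈ Ideal.span (D.minors k) := by
    intro f hf
    rw [Matrix.submatrix_mul D V f id id Function.bijective_id, Matrix.submatrix_id_id]
    refine Ideal.span_le.2 ?_ (Matrix.det_mul_mem_span_det_submatrix_cols _ _)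
    rintro _ ⟨g, hg, rfl⟩
    exact Ideal.subset_span ⟨f, g, hf, hg, rfl⟩
  rw [show (1 : S) = (U * (D * V)).det by rw [← Matrix.mul_assoc, h, Matrix.det_one]]
  refine Ideal.span_le.2 ?_ (Matrix.det_mul_mem_span_det_submatrix_rows _ _)
  rintro _ ⟨f, hf, rfl⟩
  exact hcols f hf

theorem Matrix.one_mem_span_minors_of_comp_eq_id {k : ℕ} {m n : Type*} [Fintype m]
    [DecidableEq m] [Fintype n] [DecidableEq n] (D : Matrix m n S)
    (u : (m → S) →ₗ[S] Fin k → S) (v : (Fin k → S) →ₗ[S] n → S)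
    (h : u ∘ₗ D.mulVecLin ∘ₗ v = LinearMap.id) : (1 : S) ∈ Ideal.span (D.minors k) := by
  have hmat : LinearMap.toMatrix' (u ∘ₗ D.mulVecLin ∘ₗ v) =
      LinearMap.toMatrix' u * D * LinearMap.toMatrix' v := by
    rw [LinearMap.toMatrix'_comp, LinearMap.toMatrix'_comp, ← Matrix.toLin'_apply',
      LinearMap.toMatrix'_toLin', Matrix.mul_assoc]
  rw [h, LinearMap.toMatrix'_id] at hmat
  exact Matrix.one_mem_span_minors_of_mul_mul_eq_one _ D _ hmat.symm

end Minors

theorem map_minorsIdeal_eq_top {R S : Type} [CommRing R] [CommRing S] (φ : R →+* S) {p q : ℕ}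
    (A : Matrix (Fin p) (Fin q) R) (s : ℤ)
    (h : (1 : S) ∈ Ideal.span ((A.map φ).minors s.toNat)) :
    Ideal.map φ (minorsIdeal A s) = ⊤ := by
  unfold minorsIdeal
  split_ifs
  · exact Ideal.map_top φ
  · exact Ideal.map_top φ
  · change Ideal.map φ (Ideal.span (A.minors s.toNat)) = ⊤
    rwa [Ideal.map_span, ← Matrix.minors_map, Ideal.eq_top_iff_one]

section Splitting

open LinearMap

variable {R M N : Type*} [CommRing R] [AddCommGroup M] [Module R M] [AddCommGroup N] [Module R N]

theorem LinearMap.exists_linearEquiv_ker_prod_range (f : M →ₗ[R] N)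
    [Module.Projective R (range f)] :
    ∃ e : M ≃ₗ[R] ker f × range f,
      (ker f).subtype = e.symm.toLinearMap ∘ₗ inl R (ker f) (range f) := by
  have hexact : Function.Exact (ker f).subtype f.rangeRestrict :=
    LinearMap.exact_iff.mpr (by rw [ker_rangeRestrict, Submodule.range_subtype])
  obtain ⟨e, he, -⟩ := ((hexact.split_tfae (ker f).injective_subtype
    f.surjective_rangeRestrict).out 0 2).mp
      (Module.projective_lifting_property _ _ f.surjective_rangeRestrict)
  exact ⟨e, he⟩

theorem LinearMap.exists_retraction_subtype_ker (f : M →ₗ[R] N)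
    [Module.Projective R (range f)] :
    ∃ ρ : M →ₗ[R] ker f, ρ ∘ₗ (ker f).subtype = .id := by
  obtain ⟨e, he⟩ := f.exists_linearEquiv_ker_prod_range
  refine ⟨fst R _ _ ∘ₗ e.toLinearMap, ?_⟩
  rw [he]
  ext x
  simp

theorem LinearMap.isComplemented_ker (f : M →ₗ[R] N) [Module.Projective R (range f)] :
    IsComplemented (ker f) := by
  obtain ⟨ρ, hρ⟩ := f.exists_retraction_subtype_ker
  exact ⟨_, isCompl_of_proj fun x => LinearMap.congr_fun hρ x⟩

theorem LinearMap.free_ker_of_projective_range [IsLocalRing R] [Module.Projective R M]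
    [Module.Finite R M] (f : M →ₗ[R] N) [Module.Projective R (range f)] :
    Module.Free R (ker f) ∧
      Module.finrank R (ker f) + Module.finrank R (range f) = Module.finrank R M := by
  obtain ⟨e, he⟩ := f.exists_linearEquiv_ker_prod_range
  obtain ⟨ρ, hρ⟩ := f.exists_retraction_subtype_ker
  have : Module.Finite R (ker f) :=
    .of_surjective ρ fun x => ⟨x, LinearMap.congr_fun hρ x⟩
  have : Module.Projective R (ker f) := .of_split _ _ hρ
  have : Module.Free R (ker f) := Module.free_of_flat_of_isLocalRing
  have : Module.Free R (range f) := Module.free_of_flat_of_isLocalRing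
  exact ⟨inferInstance, by rw [← Module.finrank_prod, e.finrank_eq]⟩

end Splitting

theorem Matrix.one_mem_span_minors_of_isComplemented_range {S : Type*} [CommRing S]
    [Nontrivial S] {m n : Type*} [Fintype m] [DecidableEq m] [Fintype n] [DecidableEq n]
    (D : Matrix m n S) [Module.Free S (LinearMap.range D.mulVecLin)]
    (hD : IsComplemented (LinearMap.range D.mulVecLin)) :
    (1 : S) ∈ Ideal.span (D.minors (Module.finrank S (LinearMap.range D.mulVecLin))) := by
  obtain ⟨Q, hQ⟩ := hD
  let b := (Module.finBasis S (LinearMap.range D.mulVecLin)).equivFun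
  obtain ⟨σ, hσ⟩ := Module.projective_lifting_property D.mulVecLin.rangeRestrict LinearMap.id
    D.mulVecLin.surjective_rangeRestrict
  let u := b.toLinearMap ∘ₗ Submodule.projectionOnto _ Q hQ
  let v := σ ∘ₗ b.symm.toLinearMap
  have huv : u ∘ₗ D.mulVecLin ∘ₗ v = LinearMap.id := by
    refine LinearMap.ext fun x => ?_
    have hσx : D.mulVecLin (σ (b.symm x)) = b.symm x :=
      congrArg Subtype.val (LinearMap.congr_fun hσ (b.symm x))
    simp [u, v, hσx, Submodule.projectionOnto_apply_left]
  exact D.one_mem_span_minors_of_comp_eq_id u v huv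

section Localization

variable {R : Type*} [CommRing R] (S : Submonoid R)

theorem IsLocalizedModule.ker_map_le_range_map_of_subsingleton {M N P M' N' P' : Type*}
    [AddCommGroup M] [Module R M] [AddCommGroup N] [Module R N] [AddCommGroup P] [Module R P]
    [AddCommGroup M'] [Module R M'] [AddCommGroup N'] [Module R N'] [AddCommGroup P']
    [Module R P'] (fM : M →ₗ[R] M') (fN : N →ₗ[R] N') (fP : P →ₗ[R] P')
    [IsLocalizedModule S fM] [IsLocalizedModule S fN] [IsLocalizedModule S fP]
    (f : M →ₗ[R] N) (g : N →ₗ[R] P)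
    (h : Subsingleton (LocalizedModule S
      (LinearMap.ker g ⧸ (LinearMap.range f).comap (LinearMap.ker g).subtype))) :
    LinearMap.ker (map S fN fP g) ≤ LinearMap.range (map S fM fN f) := by
  intro x hx
  rw [LinearMap.ker_localizedMap_eq_localized₀_ker] at hx
  obtain ⟨m, hm, s, rfl⟩ := hx
  obtain ⟨r, hr, hrm⟩ :=
    LocalizedModule.subsingleton_iff.mp h (Submodule.Quotient.mk ⟨m, hm⟩)
  rw [← Submodule.Quotient.mk_smul, Submodule.Quotient.mk_eq_zero] at hrm
  obtain ⟨w, hw⟩ := hrm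
  refine ⟨mk' fM w (⟨r, hr⟩ * s), ?_⟩
  rw [map_mk', hw]
  exact mk'_cancel_left fN m ⟨r, hr⟩ s

variable (Rₛ : Type*) [CommRing Rₛ] [Algebra R Rₛ] [IsLocalization S Rₛ]

-- Stated as a `LinearMap.pi` so that `IsLocalizedModule.pi` applies to it.
abbrev Pi.algebraMapLinear (ι : Type*) : (ι → R) →ₗ[R] ι → Rₛ :=
  .pi fun i ↦ Algebra.linearMap R Rₛ ∘ₗ .proj i

theorem Matrix.localizedMap_mulVecLin {m n : Type*} [Fintype m] [Fintype n]
    (A : Matrix m n R) :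
    IsLocalizedModule.map S (Pi.algebraMapLinear Rₛ n) (Pi.algebraMapLinear Rₛ m) A.mulVecLin =
      (A.map (algebraMap R Rₛ)).mulVecLin.restrictScalars R := by
  refine IsLocalizedModule.linearMap_ext S (Pi.algebraMapLinear Rₛ n)
    (Pi.algebraMapLinear Rₛ m) ?_
  rw [IsLocalizedModule.map_comp]
  ext x i
  exact RingHom.map_mulVec (algebraMap R Rₛ) A x i

theorem Matrix.ker_mulVecLin_map_le_range_of_subsingleton {l m n : Type*} [Fintype l]
    [Fintype m] [Fintype n] (A : Matrix l m R) (B : Matrix m n R)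
    (h : Subsingleton (LocalizedModule S (LinearMap.ker A.mulVecLin ⧸
      (LinearMap.range B.mulVecLin).comap (LinearMap.ker A.mulVecLin).subtype))) :
    LinearMap.ker (A.map (algebraMap R Rₛ)).mulVecLin ≤
      LinearMap.range (B.map (algebraMap R Rₛ)).mulVecLin := by
  intro x hx
  have := IsLocalizedModule.ker_map_le_range_map_of_subsingleton S (Pi.algebraMapLinear Rₛ n)
    (Pi.algebraMapLinear Rₛ m) (Pi.algebraMapLinear Rₛ l) B.mulVecLin A.mulVecLin h
    (x := x) (by rwa [A.localizedMap_mulVecLin S Rₛ])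
  rwa [B.localizedMap_mulVecLin S Rₛ] at this

end Localization

namespace FinFreeComplex

section Ring

variable {R : Type} [CommRing R] (F : FinFreeComplex R)

theorem s_eq_zero_of_lt_a {i : ℤ} (hi : i < F.a) : F.s i = 0 :=
  finsum_mem_eq_zero_of_forall_eq_zero fun j hj => by
    rw [F.rank_eq_zero j (Or.inl (lt_of_le_of_lt hj hi))]
    simp

theorem s_add_one (i : ℤ) : F.s (i + 1) = F.rank (i + 1) - F.s i := by
  have hIic : Set.Iic (i + 1) = insert (i + 1) (Set.Iic i) := by
    ext j
    simp only [Set.mem_Iic, Set.mem_insert_iff]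
    omega
  have hfinite : (Set.Iic i ∩ Function.support
      fun j => (-1 : ℤ) ^ (i + 1 - j).toNat * (F.rank j : ℤ)).Finite := by
    refine (Set.finite_Icc F.a F.b).subset fun j ⟨_, hj⟩ => ?_
    by_contra hab
    exact hj (by simp [F.rank_eq_zero j (by simp only [Set.mem_Icc] at hab; omega)])
  have hshift :
      ∑ᶠ j ∈ Set.Iic i, (-1 : ℤ) ^ (i + 1 - j).toNat * (F.rank j : ℤ) = -F.s i := by
    rw [neg_eq_neg_one_mul (F.s i), s, mul_finsum_mem]
    refine finsum_mem_congr rfl fun j hj => ?_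
    rw [show (i + 1 - j).toNat = (i - j).toNat + 1 by simp only [Set.mem_Iic] at hj; omega]
    ring
  rw [s, hIic, finsum_mem_insert' _ (by simp) hfinite, hshift, sub_self]
  simp [sub_eq_add_neg]

theorem range_d_le_ker_d (i : ℤ) :
    LinearMap.range (F.d (i + 1)).mulVecLin ≤ LinearMap.ker (F.d i).mulVecLin :=
  LinearMap.range_le_ker_iff.mpr <| by
    rw [← Matrix.mulVecLin_mul, F.d_comp_d, Matrix.mulVecLin_zero]

def map {S : Type} [CommRing S] (φ : R →+* S) : FinFreeComplex S where
  a := F.a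
  b := F.b
  rank := F.rank
  d n := (F.d n).map φ
  rank_eq_zero := F.rank_eq_zero
  d_comp_d n := by rw [← Matrix.map_mul, F.d_comp_d, Matrix.map_zero _ φ.map_zero]

theorem ker_map_d_le_range_map_d {S : Submonoid R} (Rₛ : Type) [CommRing Rₛ] [Algebra R Rₛ]
    [IsLocalization S Rₛ] {i : ℤ}
    (h : Subsingleton (LocalizedModule S (F.homologyAt (i + 1)))) :
    LinearMap.ker ((F.map (algebraMap R Rₛ)).d i).mulVecLin ≤
      LinearMap.range ((F.map (algebraMap R Rₛ)).d (i + 1)).mulVecLin := by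
  have := Matrix.ker_mulVecLin_map_le_range_of_subsingleton S Rₛ _ _ h
  rwa [add_sub_cancel_right] at this

theorem free_range_d_of_lt_a [Nontrivial R] {i : ℤ} (hi : i < F.a) :
    Module.Free R (LinearMap.range (F.d i).mulVecLin) ∧
      (Module.finrank R (LinearMap.range (F.d i).mulVecLin) : ℤ) = F.s i ∧
      IsComplemented (LinearMap.range (F.d i).mulVecLin) := by
  have : Subsingleton (Fin (F.rank i) → R) := by
    rw [F.rank_eq_zero i (Or.inl hi)]
    infer_instance
  rw [Subsingleton.elim (LinearMap.range (F.d i).mulVecLin) ⊥, F.s_eq_zero_of_lt_a hi]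
  exact ⟨inferInstance, Nat.cast_eq_zero.mpr Module.finrank_zero_of_subsingleton,
    isComplemented_bot⟩

end Ring

section LocalRing

variable {S : Type} [CommRing S] [IsLocalRing S] (F : FinFreeComplex S)

theorem free_range_d_add_one_of_exact {i : ℤ}
    (hexact : LinearMap.ker (F.d i).mulVecLin ≤ LinearMap.range (F.d (i + 1)).mulVecLin)
    [Module.Free S (LinearMap.range (F.d i).mulVecLin)]
    (hrank : (Module.finrank S (LinearMap.range (F.d i).mulVecLin) : ℤ) = F.s i) :
    Module.Free S (LinearMap.range (F.d (i + 1)).mulVecLin) ∧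
      (Module.finrank S (LinearMap.range (F.d (i + 1)).mulVecLin) : ℤ) = F.s (i + 1) ∧
      IsComplemented (LinearMap.range (F.d (i + 1)).mulVecLin) := by
  rw [le_antisymm (F.range_d_le_ker_d i) hexact]
  obtain ⟨hfree, hrank_add⟩ := (F.d i).mulVecLin.free_ker_of_projective_range
  refine ⟨hfree, ?_, (F.d i).mulVecLin.isComplemented_ker⟩
  rw [Module.finrank_fin_fun] at hrank_add
  rw [F.s_add_one, ← hrank]
  omega

theorem free_range_d_of_exact (n : ℤ)
    (hexact : ∀ i, i + 1 ≤ n →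
      LinearMap.ker (F.d i).mulVecLin ≤ LinearMap.range (F.d (i + 1)).mulVecLin)
    {i : ℤ} (hi : i ≤ n) :
    Module.Free S (LinearMap.range (F.d i).mulVecLin) ∧
      (Module.finrank S (LinearMap.range (F.d i).mulVecLin) : ℤ) = F.s i ∧
      IsComplemented (LinearMap.range (F.d i).mulVecLin) := by
  rcases lt_or_ge i F.a with hia | hia
  · exact F.free_range_d_of_lt_a hia
  have hia' : F.a - 1 ≤ i := by omega
  clear hia
  induction i, hia' using Int.leInduction with
  | base => exact F.free_range_d_of_lt_a (by omega)
  | succ i _ ih =>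
    obtain ⟨hfree, hrank, -⟩ := ih (by omega)
    exact F.free_range_d_add_one_of_exact (hexact i hi) hrank

end LocalRing

end FinFreeComplex

theorem FinFreeComplex.image_localized_free_of_homology_vanish_general (R : Type) [CommRing R]
    (F : FinFreeComplex R) (n : ℤ) (p : Ideal R) [p.IsPrime]
    (hvanish : ∀ i : ℤ, i ≤ n → Subsingleton (LocalizedModule p.primeCompl (F.homologyAt i))) :
    Module.Free (Localization.AtPrime p)
        ↥(LinearMap.range ((F.d n).map (algebraMap R (Localization.AtPrime p))).mulVecLin) ∧
      (Module.finrank (Localization.AtPrime p)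
        ↥(LinearMap.range ((F.d n).map (algebraMap R (Localization.AtPrime p))).mulVecLin) : ℤ)
        = F.s n ∧
      Ideal.map (algebraMap R (Localization.AtPrime p)) (minorsIdeal (F.d n) (F.s n)) = ⊤ := by
  set Fₚ := F.map (algebraMap R (Localization.AtPrime p))
  have hexact : ∀ i, i + 1 ≤ n →
      LinearMap.ker (Fₚ.d i).mulVecLin ≤ LinearMap.range (Fₚ.d (i + 1)).mulVecLin :=
    fun i hi => F.ker_map_d_le_range_map_d _ (hvanish (i + 1) hi)
  obtain ⟨hfree, hrank, hcompl⟩ := Fₚ.free_range_d_of_exact n hexact le_rfl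
  refine ⟨hfree, hrank, map_minorsIdeal_eq_top _ _ _ ?_⟩
  rw [show F.s n = Fₚ.s n from rfl, ← hrank, Int.toNat_natCast]
  exact (Fₚ.d n).one_mem_span_minors_of_isComplemented_range hcompl

/-- If all homology modules `H_i(F)` with `i ≤ n` vanish after localizing at a prime `p`,
then the image of the localized map `(∂_{n+1})_p` is a free `R_p`-module of rank `s_n`,
and consequently `I_{s_n}(∂_{n+1}) R_p = R_p`. -/
theorem FinFreeComplex.image_localized_free_of_homology_vanish (R : Type) [CommRing R]
    [IsNoetherianRing R] (F : FinFreeComplex R) (n : ℤ) (han : F.a ≤ n) (hnb : n ≤ F.b)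
    (p : Ideal R) [p.IsPrime]
    (hvanish : ∀ i : ℤ, i ≤ n → Subsingleton (LocalizedModule p.primeCompl (F.homologyAt i))) :
    Module.Free (Localization.AtPrime p)
        ↥(LinearMap.range ((F.d n).map (algebraMap R (Localization.AtPrime p))).mulVecLin) ∧
      (Module.finrank (Localization.AtPrime p)
        ↥(LinearMap.range ((F.d n).map (algebraMap R (Localization.AtPrime p))).mulVecLin) : ℤ)
        = F.s n ∧
      Ideal.map (algebraMap R (Localization.AtPrime p)) (minorsIdeal (F.d n) (F.s n)) = ⊤ :=
  FinFreeComplex.image_localized_free_of_homology_vanish_general R F n p hvanish
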